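/- Let $0<\beta\le 1$. For every integer $k$, every integer $l\ge k+2$, every locally integrable $f$, and every $x$ with $2^{k-1}<|x|\le 2^k$, the intrinsic square function satisfies $S_\beta(f\chi_{D_l})(x) \le C\,2^{-ln}\int_{D_l}|f(z)|\,dz$, where $D_l=\{2^{l-1}<|z|\le 2^l\}$ and $C$ depends only on $n$. -/

import Mathlib

open MeasureTheory Metric Set ENNReal NNReal Filter

noncomputable section

abbrev Rn (n : ℕ) := EuclideanSpace ℝ (Fin n)

/-- The dyadic annulus `D_l = {2^(l-1) < |z| ≤ 2^l}`. -/
def annulus {n : ℕ} (l : ℤ) : Set (Rn n) :=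
  {z | (2 : ℝ) ^ (l - 1) < ‖z‖ ∧ ‖z‖ ≤ (2 : ℝ) ^ l}

/-- The family `𝒞_β`: functions supported in the unit ball, with zero mean,
satisfying the `β`-Hölder condition with constant `1`. -/
def Cbeta (n : ℕ) (β : ℝ) : Set (Rn n → ℝ) :=
  {φ | (∀ x, φ x ≠ 0 → ‖x‖ ≤ 1) ∧ (∫ x, φ x) = 0 ∧
       ∀ x x', |φ x - φ x'| ≤ ‖x - x'‖ ^ β}

/-- The convolution `f * φ_t (y)` where `φ_t(y) = t⁻ⁿ φ(y/t)`. -/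
def convDil {n : ℕ} (f φ : Rn n → ℝ) (t : ℝ) (y : Rn n) : ℝ :=
  ∫ z, f z * (t ^ (-(n : ℝ)) * φ (t⁻¹ • (y - z)))

/-- The maximal function `A_β f(y,t) = sup_{φ ∈ 𝒞_β} |f * φ_t(y)|`. -/
def Abeta {n : ℕ} (β : ℝ) (f : Rn n → ℝ) (y : Rn n) (t : ℝ) : ℝ≥0∞ :=
  ⨆ (φ : Rn n → ℝ) (_ : φ ∈ Cbeta n β), ENNReal.ofReal |convDil f φ t y|

/-- The intrinsic square function `S_β`. -/
def Sbeta {n : ℕ} (β : ℝ) (f : Rn n → ℝ) (x : Rn n) : ℝ≥0∞ :=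
  (∫⁻ p : Rn n × ℝ in {p | 0 < p.2 ∧ dist x p.1 < p.2},
      (Abeta β f p.1 p.2) ^ 2 / ENNReal.ofReal (p.2 ^ ((n : ℝ) + 1))) ^ ((1 : ℝ) / 2)

/-!
For `φ ∈ 𝒞_β` the Hölder bound together with the support condition gives `|φ| ≤ 3`, so
`A_β g(y,t) ≤ 3 t⁻ⁿ ‖g‖₁`. If `g` lives on `D_l` and `‖x‖ ≤ 2^k` with `k + 2 ≤ l`, then every
`(y,t)` in the cone `|x - y| < t` with `t ≤ 2^(l-3)` has `B(y,t) ∩ D_l = ∅`, so `A_β g(y,t) = 0`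
there. On the rest of the cone, Tonelli gives
`S_β g(x)² ≤ 9 ‖g‖₁² ∫_{2^(l-3)}^∞ |B(x,t)| t^(-3n-1) dt = 9 ‖g‖₁² |B(0,1)| 2^(-2n(l-3)) / (2n)`.
-/

/-- `cone x 0` is the cone `Γ(x)` over which `Sbeta` integrates. -/
def cone {X : Type*} [PseudoMetricSpace X] (x : X) (a : ℝ) : Set (X × ℝ) :=
  {p | a < p.2 ∧ dist x p.1 < p.2}

section Cone

variable {X : Type*} [PseudoMetricSpace X] [MeasurableSpace X] [OpensMeasurableSpace X]

theorem measurableSet_cone (x : X) (a : ℝ) : MeasurableSet (cone x a) :=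
  (measurableSet_lt measurable_const measurable_snd).inter
    (measurableSet_lt ((continuous_const.dist continuous_id).measurable.comp measurable_fst)
      measurable_snd)

theorem setLIntegral_cone_eq (μ : Measure X) [SFinite μ] (x : X) (a : ℝ)
    {h : ℝ → ℝ≥0∞} (hh : Measurable h) :
    ∫⁻ p in cone x a, h p.2 ∂μ.prod volume = ∫⁻ t in Ioi a, μ (ball x t) * h t := by
  have hmeas : Measurable ((cone x a).indicator fun p => h p.2) :=
    (hh.comp measurable_snd).indicator (measurableSet_cone x a)
  rw [← lintegral_indicator (measurableSet_cone x a), lintegral_prod_symm _ hmeas.aemeasurable,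
    ← lintegral_indicator measurableSet_Ioi]
  congr 1 with t
  by_cases hta : a < t
  · have hslice : ∀ y, (cone x a).indicator (fun p => h p.2) (y, t)
        = (ball x t).indicator (fun _ => h t) y := fun y => by
      simp [cone, indicator, hta, mem_ball, dist_comm]
    rw [lintegral_congr hslice, lintegral_indicator_const measurableSet_ball,
      indicator_of_mem (mem_Ioi.2 hta), mul_comm]
  · simp [cone, indicator, hta]

end Cone

theorem lintegral_Ioi_rpow {a r : ℝ} (ha : 0 < a) (hr : r < -1) :
    ∫⁻ t in Ioi a, ENNReal.ofReal (t ^ r) = ENNReal.ofReal (-a ^ (r + 1) / (r + 1)) := by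
  rw [← ofReal_integral_eq_lintegral_ofReal (integrableOn_Ioi_rpow_of_lt hr ha),
    integral_Ioi_rpow_of_lt hr ha]
  filter_upwards [ae_restrict_mem measurableSet_Ioi] with t ht
  exact Real.rpow_nonneg (ha.trans ht).le _

section IntrinsicSquare

variable {n : ℕ} {β : ℝ}

theorem abs_le_three_of_mem_Cbeta (hn : 0 < n) (hβ1 : β ≤ 1) {φ : Rn n → ℝ}
    (hφ : φ ∈ Cbeta n β) (x : Rn n) : |φ x| ≤ 3 := by
  by_cases hx : φ x = 0
  · simp [hx]
  have : Nonempty (Fin n) := ⟨⟨0, hn⟩⟩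
  obtain ⟨w, hw⟩ := exists_norm_eq (Rn n) (zero_le_three (α := ℝ))
  have hfar : φ (x + w) = 0 := by
    by_contra h
    have := norm_sub_norm_le w (-x)
    rw [norm_neg, sub_neg_eq_add, add_comm] at this
    linarith [hφ.1 x hx, hφ.1 _ h]
  calc |φ x| = |φ x - φ (x + w)| := by rw [hfar, sub_zero]
    _ ≤ ‖x - (x + w)‖ ^ β := hφ.2.2 _ _
    _ = 3 ^ β := by rw [sub_add_cancel_left, norm_neg, hw]
    _ ≤ 3 ^ (1 : ℝ) := Real.rpow_le_rpow_of_exponent_le (by norm_num) hβ1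
    _ = 3 := Real.rpow_one 3

theorem enorm_convDil_le (hn : 0 < n) (hβ1 : β ≤ 1) (g : Rn n → ℝ) {φ : Rn n → ℝ}
    (hφ : φ ∈ Cbeta n β) (t : ℝ) (y : Rn n) :
    ‖convDil g φ t y‖ₑ ≤ 3 * ‖t ^ (-(n : ℝ))‖ₑ * ∫⁻ z, ‖g z‖ₑ := by
  calc ‖convDil g φ t y‖ₑ
      ≤ ∫⁻ z, ‖g z * (t ^ (-(n : ℝ)) * φ (t⁻¹ • (y - z)))‖ₑ :=
        enorm_integral_le_lintegral_enorm _
    _ ≤ ∫⁻ z, ‖g z‖ₑ * (3 * ‖t ^ (-(n : ℝ))‖ₑ) := by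
        refine lintegral_mono fun z => ?_
        rw [enorm_mul, enorm_mul, mul_comm 3, Real.enorm_eq_ofReal_abs (φ _)]
        gcongr
        exact (ENNReal.ofReal_le_ofReal (abs_le_three_of_mem_Cbeta hn hβ1 hφ _)).trans_eq
          (ENNReal.ofReal_ofNat 3)
    _ = 3 * ‖t ^ (-(n : ℝ))‖ₑ * ∫⁻ z, ‖g z‖ₑ := by
        rw [lintegral_mul_const' _ _ (by finiteness), mul_comm]

theorem Abeta_le (hn : 0 < n) (hβ1 : β ≤ 1) (g : Rn n → ℝ) (y : Rn n) (t : ℝ) :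
    Abeta β g y t ≤ 3 * ‖t ^ (-(n : ℝ))‖ₑ * ∫⁻ z, ‖g z‖ₑ :=
  iSup₂_le fun _ hφ =>
    (Real.enorm_eq_ofReal_abs _).symm.trans_le (enorm_convDil_le hn hβ1 g hφ t y)

theorem Abeta_sq_div_le (hn : 0 < n) (hβ1 : β ≤ 1) (g : Rn n → ℝ) (y : Rn n) {t : ℝ}
    (ht : 0 < t) :
    Abeta β g y t ^ 2 / ENNReal.ofReal (t ^ ((n : ℝ) + 1))
      ≤ ENNReal.ofReal (t ^ (-(3 * n + 1 : ℝ))) * (3 * ∫⁻ z, ‖g z‖ₑ) ^ 2 := by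
  have hpos : 0 < t ^ ((n : ℝ) + 1) := Real.rpow_pos_of_pos ht _
  have hpow : t ^ (-(3 * n + 1 : ℝ)) = (t ^ (-(n : ℝ))) ^ 2 * (t ^ ((n : ℝ) + 1))⁻¹ := by
    rw [← Real.rpow_neg ht.le, sq, ← Real.rpow_add ht, ← Real.rpow_add ht]
    ring_nf
  calc _ ≤ (3 * ‖t ^ (-(n : ℝ))‖ₑ * ∫⁻ z, ‖g z‖ₑ) ^ 2
          / ENNReal.ofReal (t ^ ((n : ℝ) + 1)) := by
        gcongr
        exact Abeta_le hn hβ1 g y t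
    _ = ENNReal.ofReal (t ^ (-(3 * n + 1 : ℝ))) * (3 * ∫⁻ z, ‖g z‖ₑ) ^ 2 := by
        rw [Real.enorm_of_nonneg (Real.rpow_nonneg ht.le _), hpow,
          ENNReal.ofReal_mul (by positivity), ENNReal.ofReal_pow (by positivity),
          ENNReal.ofReal_inv_of_pos hpos, div_eq_mul_inv]
        ring

theorem convDil_eq_zero_of_lt_norm_sub {g φ : Rn n → ℝ} (hφ : φ ∈ Cbeta n β) {t : ℝ}
    (ht : 0 < t) {y : Rn n} (hg : ∀ z, g z ≠ 0 → t < ‖y - z‖) : convDil g φ t y = 0 := by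
  refine integral_eq_zero_of_ae (Eventually.of_forall fun z => ?_)
  by_cases hz : g z = 0
  · simp [hz]
  have : φ (t⁻¹ • (y - z)) = 0 := by
    by_contra h
    have := hφ.1 _ h
    rw [norm_smul, norm_inv, Real.norm_of_nonneg ht.le, inv_mul_le_iff₀ ht, mul_one] at this
    linarith [hg z hz]
  simp [this]

theorem Abeta_eq_zero_of_lt_norm_sub {g : Rn n → ℝ} {t : ℝ} (ht : 0 < t)
    {y : Rn n} (hg : ∀ z, g z ≠ 0 → t < ‖y - z‖) : Abeta β g y t = 0 := by
  refine le_antisymm (iSup₂_le fun φ hφ => ?_) zero_le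
  simp [convDil_eq_zero_of_lt_norm_sub hφ ht hg]

theorem setLIntegral_cone_rpow_mul (hn : 0 < n) (x : Rn n) {a : ℝ} (ha : 0 < a) (c : ℝ≥0∞) :
    ∫⁻ p in cone x a, ENNReal.ofReal (p.2 ^ (-(3 * n + 1 : ℝ))) * c
      = ENNReal.ofReal (volume.real (ball (0 : Rn n) 1) / (2 * n) * a ^ (-(2 * n : ℝ))) * c := by
  have : Nonempty (Fin n) := ⟨⟨0, hn⟩⟩
  set ω := volume.real (ball (0 : Rn n) 1) with hω
  have hr : -(2 * n + 1 : ℝ) < -1 := by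
    have : (1 : ℝ) ≤ n := by exact_mod_cast hn
    linarith
  have hm : Measurable fun t : ℝ => ENNReal.ofReal (t ^ (-(2 * n + 1 : ℝ))) :=
    (measurable_id.pow_const _).ennreal_ofReal
  calc ∫⁻ p in cone x a, ENNReal.ofReal (p.2 ^ (-(3 * n + 1 : ℝ))) * c
      = ∫⁻ t in Ioi a, volume (ball x t) * (ENNReal.ofReal (t ^ (-(3 * n + 1 : ℝ))) * c) := by
        rw [Measure.volume_eq_prod]
        exact setLIntegral_cone_eq _ _ _ ((measurable_id.pow_const _).ennreal_ofReal.mul_const _)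
    _ = ∫⁻ t in Ioi a, ENNReal.ofReal ω * ENNReal.ofReal (t ^ (-(2 * n + 1 : ℝ))) * c := by
        refine setLIntegral_congr_fun measurableSet_Ioi fun t (ht : a < t) => ?_
        have ht0 := ha.trans ht
        have hexp : t ^ n * t ^ (-(3 * n + 1 : ℝ)) = t ^ (-(2 * n + 1 : ℝ)) := by
          rw [← Real.rpow_natCast, ← Real.rpow_add ht0]
          ring_nf
        rw [Measure.addHaar_ball _ _ ht0.le, finrank_euclideanSpace_fin, ← ofReal_measureReal,
          ← hω, ← hexp, ENNReal.ofReal_mul (by positivity)]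
        ring
    _ = ENNReal.ofReal ω
          * ENNReal.ofReal (-a ^ (-(2 * n + 1 : ℝ) + 1) / (-(2 * n + 1 : ℝ) + 1)) * c := by
        rw [lintegral_mul_const _ (hm.const_mul _), lintegral_const_mul' _ _ ofReal_ne_top,
          lintegral_Ioi_rpow ha hr]
    _ = ENNReal.ofReal (ω / (2 * n) * a ^ (-(2 * n : ℝ))) * c := by
        rw [← ENNReal.ofReal_mul measureReal_nonneg,
          show -(2 * n + 1 : ℝ) + 1 = -(2 * n) by ring, neg_div_neg_eq]
        congr 2
        ring

theorem setLIntegral_cone_Abeta_sq_div_le (hn : 0 < n) (hβ1 : β ≤ 1) (g : Rn n → ℝ)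
    (x : Rn n) {a : ℝ} (hg : ∀ y t, 0 < t → t ≤ a → dist x y < t → Abeta β g y t = 0) :
    ∫⁻ p in cone x 0, Abeta β g p.1 p.2 ^ 2 / ENNReal.ofReal (p.2 ^ ((n : ℝ) + 1))
      ≤ ∫⁻ p in cone x a,
          ENNReal.ofReal (p.2 ^ (-(3 * n + 1 : ℝ))) * (3 * ∫⁻ z, ‖g z‖ₑ) ^ 2 := by
  rw [← lintegral_indicator (measurableSet_cone x 0),
    ← lintegral_indicator (measurableSet_cone x a)]
  refine lintegral_mono fun p => ?_
  by_cases hp : p ∈ cone x 0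
  · rw [indicator_of_mem hp]
    by_cases hpa : a < p.2
    · rw [indicator_of_mem (show p ∈ cone x a from ⟨hpa, hp.2⟩)]
      exact Abeta_sq_div_le hn hβ1 g p.1 hp.1
    · simp [hg p.1 p.2 hp.1 (not_lt.1 hpa) hp.2]
  · simp [indicator_of_notMem hp]

theorem Sbeta_le_of_Abeta_eq_zero (hn : 0 < n) (hβ1 : β ≤ 1) (g : Rn n → ℝ) (x : Rn n)
    {a : ℝ} (ha : 0 < a)
    (hg : ∀ y t, 0 < t → t ≤ a → dist x y < t → Abeta β g y t = 0) :
    Sbeta β g x ≤ ENNReal.ofReal (3 * √(volume.real (ball (0 : Rn n) 1) / (2 * n))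
        * a ^ (-(n : ℝ))) * ∫⁻ z, ‖g z‖ₑ := by
  set c := volume.real (ball (0 : Rn n) 1) / (2 * n)
  have hc : 0 ≤ c := div_nonneg measureReal_nonneg (by positivity)
  set I := ∫⁻ z, ‖g z‖ₑ
  have hsq : ENNReal.ofReal (c * a ^ (-(2 * n : ℝ))) * (3 * I) ^ 2
      = (ENNReal.ofReal (3 * √c * a ^ (-(n : ℝ))) * I) ^ 2 := by
    have hreal : (3 * √c * a ^ (-(n : ℝ))) ^ 2 = 9 * (c * a ^ (-(2 * n : ℝ))) := by
      rw [mul_pow, mul_pow, Real.sq_sqrt (by positivity), ← Real.rpow_mul_natCast ha.le]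
      push_cast
      ring_nf
    rw [mul_pow (ENNReal.ofReal _), ← ENNReal.ofReal_pow (by positivity), hreal,
      ENNReal.ofReal_mul (by norm_num : (0 : ℝ) ≤ 9), ENNReal.ofReal_ofNat]
    ring
  calc Sbeta β g x
      ≤ (ENNReal.ofReal (c * a ^ (-(2 * n : ℝ))) * (3 * I) ^ 2) ^ ((1 : ℝ) / 2) := by
        rw [Sbeta, ← setLIntegral_cone_rpow_mul hn x ha]
        exact ENNReal.rpow_le_rpow (setLIntegral_cone_Abeta_sq_div_le hn hβ1 g x hg) (by norm_num)
    _ = ENNReal.ofReal (3 * √c * a ^ (-(n : ℝ))) * I := by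
        rw [hsq, ← ENNReal.rpow_natCast, ← ENNReal.rpow_mul]
        norm_num

theorem measurableSet_annulus (l : ℤ) : MeasurableSet (annulus (n := n) l) :=
  measurable_norm measurableSet_Ioc

theorem lt_norm_sub_of_mem_annulus {k l : ℤ} (hkl : k + 2 ≤ l) {x y z : Rn n}
    (hx : ‖x‖ ≤ 2 ^ k) {t : ℝ} (hxy : dist x y < t) (ht : t ≤ 2 ^ (l - 3))
    (hz : z ∈ annulus l) : t < ‖y - z‖ := by
  have hk : (2 : ℝ) ^ k ≤ 2 ^ (l - 3) * 2 := by
    rw [← zpow_add_one₀ two_ne_zero]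
    exact zpow_le_zpow_right₀ one_le_two (by omega)
  have hl : (2 : ℝ) ^ (l - 1) = 2 ^ (l - 3) * 4 := by
    rw [show l - 1 = l - 3 + 2 by ring, zpow_add₀ two_ne_zero]
    norm_num
  have hy := norm_le_norm_add_norm_sub' y x
  have hzy := norm_sub_norm_le z y
  rw [← dist_eq_norm, dist_comm] at hy
  rw [norm_sub_rev] at hzy
  linarith [hz.1]

end IntrinsicSquare

theorem intrinsic_square_pointwise_bound_outer_general
    (n : ℕ) (hn : 0 < n) (β : ℝ) (hβ1 : β ≤ 1) :
    ∃ C : ℝ, 0 < C ∧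
      ∀ (k l : ℤ), k + 2 ≤ l →
      ∀ f : Rn n → ℝ, LocallyIntegrable f volume →
      ∀ x : Rn n, (2 : ℝ) ^ (k - 1) < ‖x‖ → ‖x‖ ≤ (2 : ℝ) ^ k →
        Sbeta β ((annulus l).indicator f) x
          ≤ ENNReal.ofReal C * ENNReal.ofReal ((2 : ℝ) ^ (-(l * (n : ℤ)))) *
              ∫⁻ z in annulus (n := n) l, (‖f z‖₊ : ℝ≥0∞) := by
  have hω : 0 < volume.real (ball (0 : Rn n) 1) :=
    ENNReal.toReal_pos (measure_ball_pos _ _ one_pos).ne' measure_ball_lt_top.ne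
  refine ⟨3 * √(volume.real (ball (0 : Rn n) 1) / (2 * n)) * 2 ^ (3 * n), by positivity, ?_⟩
  intro k l hkl f _ x _ hx
  have hscale : ((2 : ℝ) ^ (l - 3)) ^ (-(n : ℝ)) = 2 ^ (3 * n) * 2 ^ (-(l * (n : ℤ))) := by
    rw [Real.rpow_neg (by positivity), Real.rpow_natCast, ← zpow_natCast, ← zpow_mul,
      ← zpow_neg, ← zpow_natCast, ← zpow_add₀ two_ne_zero]
    congr 1
    push_cast
    ring
  have hnorm : ∫⁻ z, ‖(annulus l).indicator f z‖ₑ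
      = ∫⁻ z in annulus (n := n) l, (‖f z‖₊ : ℝ≥0∞) := by
    simp_rw [enorm_indicator_eq_indicator_enorm]
    exact lintegral_indicator (measurableSet_annulus l) _
  calc Sbeta β ((annulus l).indicator f) x
      ≤ ENNReal.ofReal (3 * √(volume.real (ball (0 : Rn n) 1) / (2 * n))
          * ((2 : ℝ) ^ (l - 3)) ^ (-(n : ℝ))) * ∫⁻ z, ‖(annulus l).indicator f z‖ₑ :=
        Sbeta_le_of_Abeta_eq_zero hn hβ1 _ x (by positivity) fun y t ht hta hxy =>
          Abeta_eq_zero_of_lt_norm_sub ht fun z hz =>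
            lt_norm_sub_of_mem_annulus hkl hx hxy hta (mem_of_indicator_ne_zero hz)
    _ = _ := by
        rw [hscale, hnorm, ← mul_assoc, ENNReal.ofReal_mul (by positivity)]

theorem intrinsic_square_pointwise_bound_outer
    (n : ℕ) (hn : 0 < n) (β : ℝ) (hβ0 : 0 < β) (hβ1 : β ≤ 1) :
    ∃ C : ℝ, 0 < C ∧
      ∀ (k l : ℤ), k + 2 ≤ l →
      ∀ f : Rn n → ℝ, LocallyIntegrable f volume →
      ∀ x : Rn n, (2 : ℝ) ^ (k - 1) < ‖x‖ → ‖x‖ ≤ (2 : ℝ) ^ k →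
        Sbeta β ((annulus l).indicator f) x
          ≤ ENNReal.ofReal C * ENNReal.ofReal ((2 : ℝ) ^ (-(l * (n : ℤ)))) *
              ∫⁻ z in annulus (n := n) l, (‖f z‖₊ : ℝ≥0∞) :=
  intrinsic_square_pointwise_bound_outer_general n hn β hβ1
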